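/- The Goldner–Harary graph is not Hamiltonian. -/

import Mathlib

/-- The Goldner–Harary graph on 11 vertices and 27 edges: the triangle `0,1,2`,
the two apexes `3` and `4` of the bipyramid (each adjacent to `0,1,2`), and six
stellation vertices `5,...,10`, one over each face of the bipyramid. -/
def goldnerHarary : SimpleGraph (Fin 11) :=
  SimpleGraph.fromRel (fun u v =>
    (u = 0 ∧ v = 1) ∨ (u = 1 ∧ v = 2) ∨ (u = 2 ∧ v = 0) ∨
    (u = 3 ∧ (v = 0 ∨ v = 1 ∨ v = 2)) ∨
    (u = 4 ∧ (v = 0 ∨ v = 1 ∨ v = 2)) ∨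
    (u = 5 ∧ (v = 0 ∨ v = 1 ∨ v = 3)) ∨
    (u = 6 ∧ (v = 1 ∨ v = 2 ∨ v = 3)) ∨
    (u = 7 ∧ (v = 2 ∨ v = 0 ∨ v = 3)) ∨
    (u = 8 ∧ (v = 0 ∨ v = 1 ∨ v = 4)) ∨
    (u = 9 ∧ (v = 1 ∨ v = 2 ∨ v = 4)) ∨
    (u = 10 ∧ (v = 2 ∨ v = 0 ∨ v = 4)))


/-! The stellation vertices `5, …, 10` are pairwise non-adjacent, so they form an independent
set containing 6 of the 11 vertices. Along a Hamiltonian cycle, every vertex of an independent set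
is preceded by a vertex outside it, and distinct vertices have distinct predecessors; hence an
independent set contains at most half of the vertices. -/

namespace SimpleGraph

open Finset Function

variable {V : Type*} {G : SimpleGraph V}

theorem Walk.IsHamiltonianCycle.exists_injective_adj [DecidableEq V] {a : V} {p : G.Walk a a}
    (hp : p.IsHamiltonianCycle) : ∃ σ : V → V, Injective σ ∧ ∀ v, G.Adj (σ v) v := by
  have hsnd : ∀ v, ∃ d ∈ p.darts, d.snd = v := fun v => by
    rw [← List.mem_map, map_snd_darts, ← support_tail_of_not_nil p hp.not_nil]
    exact hp.isHamiltonian_tail.mem_support v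
  choose d hd hdv using hsnd
  have hfst : ∀ x ∈ p.darts, ∀ y ∈ p.darts, x.fst = y.fst → x = y :=
    List.inj_on_of_nodup_map (by rw [map_fst_darts]; exact hp.isCycle.nodup_dropLast_support)
  refine ⟨fun v => (d v).fst, fun u w huw => ?_, fun v => by simpa only [hdv] using (d v).adj⟩
  rw [← hdv u, ← hdv w, hfst _ (hd u) _ (hd w) huw]

theorem IsIndepSet.card_le_card_compl [Fintype V] [DecidableEq V] {s : Finset V}
    (hs : G.IsIndepSet s) {σ : V → V} (hσ : Injective σ) (hadj : ∀ v, G.Adj (σ v) v) :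
    #s ≤ #sᶜ := by
  have hmaps : s.image σ ⊆ sᶜ := by
    simp only [subset_iff, mem_image, mem_compl, forall_exists_index, and_imp]
    rintro _ v hv rfl hσv
    exact hs hσv hv (hadj v).ne (hadj v)
  calc #s = #(s.image σ) := (card_image_of_injective s hσ).symm
    _ ≤ #sᶜ := card_le_card hmaps

theorem IsHamiltonian.card_le_card_compl_of_isIndepSet [Fintype V] [DecidableEq V]
    [Nontrivial V] (hG : G.IsHamiltonian) {s : Finset V} (hs : G.IsIndepSet s) : #s ≤ #sᶜ := by
  obtain ⟨a, p, hp⟩ := hG Fintype.one_lt_card.ne'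
  obtain ⟨σ, hσ, hadj⟩ := hp.exists_injective_adj
  exact hs.card_le_card_compl hσ hadj

end SimpleGraph

set_option synthInstance.maxSize 1024 in
instance : DecidableRel goldnerHarary.Adj := fun u v =>
  decidable_of_iff _ (SimpleGraph.fromRel_adj _ u v).symm

theorem goldnerHarary_isIndepSet_stellations :
    goldnerHarary.IsIndepSet ({5, 6, 7, 8, 9, 10} : Finset (Fin 11)) := by
  decide

/-- The Goldner–Harary graph is not Hamiltonian. -/
theorem goldnerHarary_not_isHamiltonian : ¬ goldnerHarary.IsHamiltonian := fun h =>
  absurd (h.card_le_card_compl_of_isIndepSet goldnerHarary_isIndepSet_stellations) (by decide)
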